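/- arXiv:2105.12979 — 11 statements merged into one kernel-verified Lean document; each statement's English description precedes it below -/
import Mathlib

section
/- The odd, π-periodic function u defined on [0, π/2] by u(θ) = cos θ + sin θ − 1 (extended oddly and π-periodically to [-π,π]) satisfies ∫_{-π}^{π}u dθ = 0, ∫_{-π}^{π}u cos θ dθ = 0, ∫_{-π}^{π}u sin θ dθ = 0, and (∫((u')² − u²))/(∫|u|)² = 1/(2(4−π)). -/
/-!
Under `θ ↦ θ + π` the functions `u cos` and `u sin` change sign, so their integrals over a window
of length `2π` vanish, while `∫ u = 0` because `u` is odd. The integrands `(u')² - u²` and `|u|` are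
even and `π`-periodic, hence also symmetric about `π / 2`, so their integrals over `[-π, π]` are
four times those over `[0, π / 2]`, where `u = cos + sin - 1 ≥ 0` and both integrals equal
`2 - π / 2`.
-/

open Real MeasureTheory intervalIntegral

namespace Function

section Deriv

variable {𝕜 F : Type*} [NontriviallyNormedField 𝕜] [NormedAddCommGroup F] [NormedSpace 𝕜 F]
  {f : 𝕜 → F}

theorem Odd.deriv (hf : f.Odd) : (deriv f).Even := fun x => by
  have h := deriv_comp_neg f x
  rw [show (fun y => f (-y)) = -f from funext hf, deriv.neg, neg_inj] at h
  exact h.symm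

theorem Periodic.deriv {c : 𝕜} (hf : Periodic f c) : Periodic (deriv f) c := fun x => by
  rw [← deriv_comp_add_const, hf.funext]

end Deriv

theorem Periodic.mul_antiperiodic {α β : Type*} [Add α] [Mul β] [HasDistribNeg β] {f g : α → β}
    {c : α} (hf : Periodic f c) (hg : Antiperiodic g c) : Antiperiodic (f * g) c := fun x => by
  simp [hf x, hg x]

section Integral

variable {f : ℝ → ℝ}

theorem Odd.intervalIntegral_eq_zero (hf : f.Odd) (a : ℝ) : ∫ x in -a..a, f x = 0 := by
  have h : ∫ x in -a..a, f x = -∫ x in -a..a, f x :=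
    calc ∫ x in -a..a, f x = ∫ x in -a..a, f (-x) := by rw [integral_comp_neg, neg_neg]
      _ = -∫ x in -a..a, f x := by simp_rw [hf.eq, intervalIntegral.integral_neg]
  linarith

theorem Antiperiodic.intervalIntegral_add_two_mul_eq_zero {c : ℝ} (hf : Antiperiodic f c)
    (t : ℝ) : ∫ x in t..t + 2 * c, f x = 0 := by
  have h : ∫ x in t..t + 2 * c, f x = -∫ x in t..t + 2 * c, f x :=
    calc ∫ x in t..t + 2 * c, f x = ∫ x in t + c..t + c + 2 * c, f x :=
          hf.periodic_two_mul.intervalIntegral_add_eq t (t + c)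
      _ = ∫ x in t..t + 2 * c, f (x + c) := by rw [integral_comp_add_right, add_right_comm]
      _ = -∫ x in t..t + 2 * c, f x := by
        simp_rw [show ∀ x, f (x + c) = -f x from hf, intervalIntegral.integral_neg]
  linarith

theorem Even.intervalIntegral_neg_eq_two_mul (hf : f.Even) {a : ℝ}
    (hint : IntervalIntegrable f volume 0 a) : ∫ x in -a..a, f x = 2 * ∫ x in 0..a, f x := by
  have hneg : ∫ x in -a..0, f x = ∫ x in 0..a, f x := by
    simpa [hf.eq] using (integral_comp_neg (a := 0) (b := a) (f := f)).symm
  have hint' : IntervalIntegrable f volume (-a) 0 := by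
    simpa [hf.eq] using (IntervalIntegrable.iff_comp_neg (f := f)).mp hint.symm
  rw [← integral_add_adjacent_intervals hint' hint, hneg, two_mul]

theorem Periodic.intervalIntegral_neg_eq_four_mul_of_even {T : ℝ} (hp : Periodic f T)
    (hf : f.Even) (hint : IntervalIntegrable f volume 0 (T / 2)) :
    ∫ x in -T..T, f x = 4 * ∫ x in 0..T / 2, f x := by
  have hrefl : ∀ x, f (T - x) = f x := fun x => by rw [sub_eq_neg_add, hp, hf.eq]
  have hhalf : T - T / 2 = T / 2 := by ring
  have hint' : IntervalIntegrable f volume (T / 2) T := by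
    simpa [hrefl, hhalf] using (hint.comp_sub_left T).symm
  have hsecond : ∫ x in T / 2..T, f x = ∫ x in 0..T / 2, f x := by
    simpa [hrefl, hhalf] using (integral_comp_sub_left (a := 0) (b := T / 2) (f := f) T).symm
  rw [hf.intervalIntegral_neg_eq_two_mul (hint.trans hint'),
    ← integral_add_adjacent_intervals hint hint', hsecond]
  ring

theorem Periodic.intervalIntegral_neg_eq_four_mul_of_eqOn {T : ℝ} (hp : Periodic f T)
    (hf : f.Even) (hT : 0 ≤ T) {g : ℝ → ℝ} (hg : Continuous g)
    (hfg : Set.EqOn f g (Set.Ioo 0 (T / 2))) :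
    ∫ x in -T..T, f x = 4 * ∫ x in 0..T / 2, g x := by
  have hT2 : 0 ≤ T / 2 := by positivity
  rw [hp.intervalIntegral_neg_eq_four_mul_of_even hf
      ((hg.intervalIntegrable _ _).congr_uIoo (Set.uIoo_of_le hT2 ▸ hfg.symm)),
    integral_congr_Ioo_of_le hT2 hfg]

end Integral

end Function

theorem one_le_cos_add_sin {θ : ℝ} (h0 : 0 ≤ θ) (h1 : θ ≤ π / 2) : 1 ≤ cos θ + sin θ := by
  have hs := sin_nonneg_of_nonneg_of_le_pi h0 (by linarith [pi_pos])
  have hc := cos_nonneg_of_mem_Icc ⟨by linarith [pi_pos], h1⟩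
  nlinarith [sin_sq_add_cos_sq θ]

theorem integral_cos_add_sin_sub_one : ∫ x in 0..π / 2, (cos x + sin x - 1) = 2 - π / 2 := by
  have hderiv : ∀ x, HasDerivAt (fun x => sin x - cos x - x) (cos x + sin x - 1) x := fun x =>
    ((hasDerivAt_sin x).sub (hasDerivAt_cos x)).sub (hasDerivAt_id' x) |>.congr_deriv (by ring)
  rw [integral_eq_sub_of_hasDerivAt (fun x _ => hderiv x)
    ((by fun_prop : Continuous _).intervalIntegrable _ _)]
  simp only [sin_pi_div_two, cos_pi_div_two, sin_zero, cos_zero]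
  ring

theorem integral_sq_cos_sub_sin_sub_sq_cos_add_sin_sub_one :
    ∫ x in 0..π / 2, ((cos x - sin x) ^ 2 - (cos x + sin x - 1) ^ 2) = 2 - π / 2 := by
  have hderiv : ∀ x, HasDerivAt (fun x => 2 * sin x - 2 * cos x - x - 2 * sin x ^ 2)
      ((cos x - sin x) ^ 2 - (cos x + sin x - 1) ^ 2) x := fun x => by
    refine ((((hasDerivAt_sin x).const_mul 2).sub ((hasDerivAt_cos x).const_mul 2)).sub
      (hasDerivAt_id' x)).sub (((hasDerivAt_sin x).pow 2).const_mul 2) |>.congr_deriv ?_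
    push_cast
    ring
  rw [integral_eq_sub_of_hasDerivAt (fun x _ => hderiv x)
    ((by fun_prop : Continuous _).intervalIntegrable _ _)]
  simp only [sin_pi_div_two, cos_pi_div_two, sin_zero, cos_zero]
  ring

theorem eqOn_abs_of_eqOn_Icc {u : ℝ → ℝ}
    (hdef : ∀ θ ∈ Set.Icc (0 : ℝ) (π / 2), u θ = cos θ + sin θ - 1) :
    Set.EqOn (fun θ => |u θ|) (fun θ => cos θ + sin θ - 1) (Set.Icc 0 (π / 2)) := fun θ hθ => by
  simp only [hdef θ hθ, abs_of_nonneg (sub_nonneg.2 (one_le_cos_add_sin hθ.1 hθ.2))]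

theorem eqOn_deriv_sq_sub_sq_of_eqOn_Icc {u : ℝ → ℝ}
    (hdef : ∀ θ ∈ Set.Icc (0 : ℝ) (π / 2), u θ = cos θ + sin θ - 1) :
    Set.EqOn (fun θ => deriv u θ ^ 2 - u θ ^ 2)
      (fun θ => (cos θ - sin θ) ^ 2 - (cos θ + sin θ - 1) ^ 2) (Set.Ioo 0 (π / 2)) := fun θ hθ => by
  have hev : u =ᶠ[nhds θ] fun x => cos x + sin x - 1 :=
    Filter.eventually_of_mem (Ioo_mem_nhds hθ.1 hθ.2) fun x hx =>
      hdef x (Set.Ioo_subset_Icc_self hx)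
  have hderiv : HasDerivAt (fun x => cos x + sin x - 1) (cos θ - sin θ) θ := by
    refine ((hasDerivAt_cos θ).add (hasDerivAt_sin θ)).sub_const 1 |>.congr_deriv ?_
    ring
  simp only [hev.deriv_eq, hderiv.deriv, hdef θ (Set.Ioo_subset_Icc_self hθ)]

theorem stmt_1 (u : ℝ → ℝ)
    (hdef : ∀ θ ∈ Set.Icc (0 : ℝ) (π / 2), u θ = Real.cos θ + Real.sin θ - 1)
    (hodd : ∀ θ : ℝ, u (-θ) = -u θ)
    (hper : Function.Periodic u π) :
    (∫ θ in (-π)..π, u θ) = 0 ∧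
    (∫ θ in (-π)..π, u θ * Real.cos θ) = 0 ∧
    (∫ θ in (-π)..π, u θ * Real.sin θ) = 0 ∧
    (∫ θ in (-π)..π, ((deriv u θ) ^ 2 - (u θ) ^ 2)) /
      (∫ θ in (-π)..π, |u θ|) ^ 2 = 1 / (2 * (4 - π)) := by
  have hwindow : -π + 2 * π = π := by ring
  have hcos : ∫ θ in (-π)..π, u θ * cos θ = 0 := by
    simpa [hwindow] using
      (hper.mul_antiperiodic cos_antiperiodic).intervalIntegral_add_two_mul_eq_zero (-π)
  have hsin : ∫ θ in (-π)..π, u θ * sin θ = 0 := by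
    simpa [hwindow] using
      (hper.mul_antiperiodic sin_antiperiodic).intervalIntegral_add_two_mul_eq_zero (-π)
  have hnum : ∫ θ in (-π)..π, (deriv u θ ^ 2 - u θ ^ 2) = 2 * (4 - π) := by
    rw [Function.Periodic.intervalIntegral_neg_eq_four_mul_of_eqOn
        (fun θ => by simp only [hper.deriv θ, hper θ])
        (fun θ => by simp only [Function.Odd.deriv hodd θ, hodd θ, neg_sq]) pi_pos.le
        (by fun_prop) (eqOn_deriv_sq_sub_sq_of_eqOn_Icc hdef),
      integral_sq_cos_sub_sin_sub_sq_cos_add_sin_sub_one]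
    ring
  have hden : ∫ θ in (-π)..π, |u θ| = 2 * (4 - π) := by
    rw [Function.Periodic.intervalIntegral_neg_eq_four_mul_of_eqOn
        (fun θ => by simp only [hper θ]) (fun θ => by simp only [hodd θ, abs_neg]) pi_pos.le
        (by fun_prop) ((eqOn_abs_of_eqOn_Icc hdef).mono Set.Ioo_subset_Icc_self),
      integral_cos_add_sin_sub_one]
    ring
  refine ⟨Function.Odd.intervalIntegral_eq_zero hodd π, hcos, hsin, ?_⟩
  rw [hnum, hden]
  field_simp [(sub_pos.2 pi_lt_four).ne']
end

section
/- For every x in the open interval (π/2, π), x cos x − sin x + (1/π)(2x + sin(2x)) < 0. -/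
/-!
Substitute `x = t + π/2` with `t ∈ (0, π/2)`. Jordan's inequality `sin t ≥ 2t/π`, the bound
`cos t ≥ 1 - t²/2` and `sin 2t ≥ 0` bound the expression above by `t²(1/2 - 2/π) + t(2/π - 1)`,
which is negative because `2 < π < 4`.
-/

open Real

lemma quadratic_pi_neg {t : ℝ} (ht : 0 < t) : t ^ 2 * (1 / 2 - 2 / π) + t * (2 / π - 1) < 0 := by
  have h2 : 1 / 2 - 2 / π < 0 := by
    rw [sub_neg, div_lt_div_iff₀ two_pos pi_pos]
    linarith [pi_lt_four]
  have h1 : 2 / π - 1 < 0 := by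
    rw [sub_neg, div_lt_one pi_pos]
    linarith [pi_gt_three]
  nlinarith [mul_neg_of_pos_of_neg (pow_pos ht 2) h2, mul_neg_of_pos_of_neg ht h1]

lemma neg_mul_sin_sub_cos_add_le {t : ℝ} (h0 : 0 ≤ t) (h1 : t ≤ π / 2) :
    -(t + π / 2) * sin t - cos t + (2 * t + π) / π ≤ t ^ 2 * (1 / 2 - 2 / π) + t * (2 / π - 1) := by
  have hjordan : 2 / π * t ≤ sin t := mul_le_sin h0 h1
  have hcos : 1 - t ^ 2 / 2 ≤ cos t := one_sub_sq_div_two_le_cos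
  have hweight : 0 ≤ t + π / 2 := by linarith [pi_pos]
  calc -(t + π / 2) * sin t - cos t + (2 * t + π) / π
      ≤ -(t + π / 2) * (2 / π * t) - (1 - t ^ 2 / 2) + (2 * t + π) / π := by
        linarith [mul_le_mul_of_nonneg_left hjordan hweight]
    _ = t ^ 2 * (1 / 2 - 2 / π) + t * (2 / π - 1) := by
        field_simp
        ring

theorem stmt_3 (x : ℝ) (hx : x ∈ Set.Ioo (π / 2) π) :
    x * Real.cos x - Real.sin x + (1 / π) * (2 * x + Real.sin (2 * x)) < 0 := by
  obtain ⟨hlo, hhi⟩ := hx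
  set t := x - π / 2 with ht
  have hx_eq : x = t + π / 2 := by ring
  have hsin_two : 0 ≤ sin (2 * t) := sin_nonneg_of_nonneg_of_le_pi (by linarith) (by linarith)
  calc x * cos x - sin x + 1 / π * (2 * x + sin (2 * x))
      = -(t + π / 2) * sin t - cos t + (2 * t + π) / π - sin (2 * t) / π := by
        rw [hx_eq, cos_add_pi_div_two, sin_add_pi_div_two,
          show 2 * (t + π / 2) = 2 * t + π by ring, sin_add_pi]
        field_simp
        ring
    _ ≤ -(t + π / 2) * sin t - cos t + (2 * t + π) / π :=
        sub_le_self _ (div_nonneg hsin_two pi_pos.le)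
    _ ≤ t ^ 2 * (1 / 2 - 2 / π) + t * (2 / π - 1) :=
        neg_mul_sin_sub_cos_add_le (by linarith) (by linarith)
    _ < 0 := quadratic_pi_neg (by linarith)
end

section
/- For every ℓ in the open interval (π, 2π), ℓ − 2 tan(ℓ/2) + (4/π) sin(ℓ/2)(1 + ℓ/ sin ℓ) > 0. -/
/-!
Write `ℓ = 2s + π` with `0 < s < π/2`. Clearing the denominator `sin s > 0`, the claim becomes
`2 (1 - cos s) + (4/π) (s - sin s cos s) < π sin s + 2 s sin s`.
Termwise, `1 - cos s ≤ s sin s`, and `(4/π) (s - sin s cos s) ≤ (4/π) s < 2 s ≤ π sin s`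
by Jordan's inequality.
-/

open Real

lemma one_sub_cos_le_mul_sin {s : ℝ} (hs : 0 ≤ s) (hs3 : s ^ 2 ≤ 3) : 1 - cos s ≤ s * sin s :=
  calc 1 - cos s ≤ s ^ 2 / 2 := by linarith [one_sub_sq_div_two_le_cos (x := s)]
    _ ≤ s * (s - s ^ 3 / 6) := by nlinarith [mul_nonneg (sq_nonneg s) (sub_nonneg.2 hs3)]
    _ ≤ s * sin s := mul_le_mul_of_nonneg_left (sin_ge_sub_cube hs) hs

lemma two_mul_one_sub_cos_add_lt {s : ℝ} (hs : 0 < s) (hs' : s < π / 2) :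
    2 * (1 - cos s) + 4 / π * (s - sin s * cos s) < π * sin s + 2 * s * sin s := by
  have hcos : 1 - cos s ≤ s * sin s :=
    one_sub_cos_le_mul_sin hs.le (by nlinarith [pi_lt_d2])
  have hjordan : 2 * s ≤ π * sin s :=
    calc 2 * s = π * (2 / π * s) := by field_simp
      _ ≤ π * sin s := by gcongr; exact mul_le_sin hs.le hs'.le
  have hsc : 0 < sin s * cos s :=
    mul_pos (sin_pos_of_pos_of_lt_pi hs (by linarith [pi_pos]))
      (cos_pos_of_mem_Ioo ⟨by linarith [pi_pos], hs'⟩)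
  have hsmall : 4 / π * (s - sin s * cos s) < 2 * s := by
    rw [div_mul_eq_mul_div, div_lt_iff₀ pi_pos]
    nlinarith [pi_gt_three]
  linarith

theorem stmt_4 (ℓ : ℝ) (hℓ : ℓ ∈ Set.Ioo π (2 * π)) :
    ℓ - 2 * Real.tan (ℓ / 2) + (4 / π) * Real.sin (ℓ / 2) * (1 + ℓ / Real.sin ℓ) > 0 := by
  obtain ⟨s, rfl⟩ : ∃ s, ℓ = 2 * s + π := ⟨(ℓ - π) / 2, by ring⟩
  have hs : 0 < s := by linarith [hℓ.1]
  have hs' : s < π / 2 := by linarith [hℓ.2]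
  have hsin : 0 < sin s := sin_pos_of_pos_of_lt_pi hs (by linarith [pi_pos])
  have hcos : 0 < cos s := cos_pos_of_mem_Ioo ⟨by linarith [pi_pos], hs'⟩
  have hreduce : 2 * s + π - 2 * tan ((2 * s + π) / 2)
        + (4 / π) * sin ((2 * s + π) / 2) * (1 + (2 * s + π) / sin (2 * s + π)) =
      (π * sin s + 2 * s * sin s - (2 * (1 - cos s) + 4 / π * (s - sin s * cos s))) / sin s := by
    rw [tan_eq_sin_div_cos, show (2 * s + π) / 2 = s + π / 2 by ring, sin_add_pi_div_two,
      cos_add_pi_div_two, sin_add_pi, sin_two_mul]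
    field_simp
    ring
  rw [hreduce]
  exact div_pos (sub_pos.2 (two_mul_one_sub_cos_add_lt hs hs')) hsin
end

section
/- For all x in [0, π], 2 tan(x/2) − x ≤ (x²/12) · 2 sin(x/2)(1 + x/sin x); equivalently the function h(x) = (2 tan(x/2) − x)/(2 sin(x/2)(1 + x/sin x)) satisfies h(x) ≤ x²/12 on (0, π). -/
/-! Substituting `t = x / 2` and multiplying by `cos t / 2 > 0` turns the inequality into
`sin t - t cos t ≤ (t² / 3) (t + sin t cos t)`. The function `t³ / 3 - sin t + t cos t` vanishes
at `0` and has derivative `t (t - sin t) ≥ 0`, so `sin t - t cos t ≤ t³ / 3`; the remaining term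
`t² sin t cos t / 3` is nonnegative on `[0, π / 2]`. -/

open Real

theorem sin_sub_mul_cos_le_cube_div_three {t : ℝ} (ht : 0 ≤ t) :
    sin t - t * cos t ≤ t ^ 3 / 3 := by
  set g : ℝ → ℝ := fun s => s ^ 3 / 3 - sin s + s * cos s
  have hg : ∀ s, HasDerivAt g (s * (s - sin s)) s := fun s =>
    (((hasDerivAt_pow 3 s).div_const 3).sub (hasDerivAt_sin s)).add
      ((hasDerivAt_id s).mul (hasDerivAt_cos s)) |>.congr_deriv (by simp; ring)
  have hmono : MonotoneOn g (Set.Ici 0) :=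
    monotoneOn_of_hasDerivWithinAt_nonneg (convex_Ici 0)
      (fun s _ => (hg s).continuousAt.continuousWithinAt)
      (fun s _ => (hg s).hasDerivWithinAt)
      (fun s hs => by
        rw [interior_Ici, Set.mem_Ioi] at hs
        exact mul_nonneg hs.le (sub_nonneg.2 (sin_le hs.le)))
  have hg0 : g 0 ≤ g t := hmono Set.self_mem_Ici ht ht
  simp only [g] at hg0
  norm_num at hg0
  linarith

theorem stmt_6 (x : ℝ) (hx : x ∈ Set.Icc (0 : ℝ) π) :
    2 * Real.tan (x / 2) - x ≤
      (x ^ 2 / 12) * (2 * Real.sin (x / 2) * (1 + x / Real.sin x)) := by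
  obtain ⟨hx0, hxπ⟩ := hx
  rcases hx0.eq_or_lt with rfl | hx0
  · simp
  -- At `x = π` Mathlib's conventions give `tan (π / 2) = 0` and `π / sin π = 0`.
  rcases hxπ.eq_or_lt with rfl | hxπ
  · simp [tan_pi_div_two]
    nlinarith [pi_pos]
  set t := x / 2 with ht
  have hsin : 0 < sin t := sin_pos_of_pos_of_lt_pi (by linarith) (by linarith)
  have hcos : 0 < cos t := cos_pos_of_mem_Ioo ⟨by linarith, by linarith⟩
  have hcubic := sin_sub_mul_cos_le_cube_div_three (by linarith : 0 ≤ t)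
  rw [tan_eq_sin_div_cos, show x = 2 * t by ring, sin_two_mul]
  field_simp
  nlinarith [mul_pos hsin hcos]
end

section
/- For every x in [0, π], the function f(x) = (x²/12)(x + sin x) − 2 sin(x/2) + x cos(x/2) is nonnegative. -/
/-!
Bound `sin x`, `sin (x/2)` and `cos (x/2)` by their Taylor polynomials of degrees 7, 5 and 6, each
from the side that keeps the inequality; these bounds follow from `sin x ≥ x - x³/6` by repeatedly
integrating from `0`. What remains is the polynomial `x³ (80640 - 11424x² + 651x⁴ - 16x⁶) / 967680`,
whose cubic factor in `x²` is positive for `x² ≤ π² < 9.9225`.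
-/

open Real

theorem le_of_hasDerivAt_le {f g f' g' : ℝ → ℝ} {a x : ℝ}
    (hf : ∀ y, HasDerivAt f (f' y) y) (hg : ∀ y, HasDerivAt g (g' y) y) (ha : f a ≤ g a)
    (hle : ∀ y, a ≤ y → f' y ≤ g' y) (hx : a ≤ x) : f x ≤ g x := by
  have hmono : MonotoneOn (fun y => g y - f y) (Set.Ici a) := by
    refine monotoneOn_of_hasDerivWithinAt_nonneg (convex_Ici a)
      (fun y _ => ((hg y).sub (hf y)).continuousAt.continuousWithinAt)
      (fun y _ => ((hg y).sub (hf y)).hasDerivWithinAt) fun y hy => ?_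
    rw [interior_Ici] at hy
    exact sub_nonneg.2 (hle y (le_of_lt hy))
  linarith [hmono Set.self_mem_Ici hx hx]

namespace Real

theorem cos_le_taylor_four {x : ℝ} (hx : 0 ≤ x) : cos x ≤ 1 - x ^ 2 / 2 + x ^ 4 / 24 := by
  refine le_of_hasDerivAt_le (g := fun y => 1 - y ^ 2 / 2 + y ^ 4 / 24)
    (g' := fun y => -y + y ^ 3 / 6) hasDerivAt_cos (fun y => ?_)
    (by norm_num) (fun y hy => by linarith [sin_ge_sub_cube hy]) hx
  exact ((((hasDerivAt_pow 2 y).div_const 2).const_sub 1).add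
    ((hasDerivAt_pow 4 y).div_const 24)).congr_deriv (by norm_num; ring)

theorem sin_le_taylor_five {x : ℝ} (hx : 0 ≤ x) :
    sin x ≤ x - x ^ 3 / 6 + x ^ 5 / 120 := by
  refine le_of_hasDerivAt_le (g := fun y => y - y ^ 3 / 6 + y ^ 5 / 120) hasDerivAt_sin
    (fun y => ?_) (by norm_num) (fun y hy => cos_le_taylor_four hy) hx
  exact (((hasDerivAt_id y).sub ((hasDerivAt_pow 3 y).div_const 6)).add
    ((hasDerivAt_pow 5 y).div_const 120)).congr_deriv (by norm_num; ring)

theorem taylor_six_le_cos {x : ℝ} (hx : 0 ≤ x) :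
    1 - x ^ 2 / 2 + x ^ 4 / 24 - x ^ 6 / 720 ≤ cos x := by
  refine le_of_hasDerivAt_le (f := fun y => 1 - y ^ 2 / 2 + y ^ 4 / 24 - y ^ 6 / 720)
    (f' := fun y => -y + y ^ 3 / 6 - y ^ 5 / 120) (fun y => ?_)
    hasDerivAt_cos (by norm_num) (fun y hy => by linarith [sin_le_taylor_five hy]) hx
  exact (((((hasDerivAt_pow 2 y).div_const 2).const_sub 1).add
    ((hasDerivAt_pow 4 y).div_const 24)).sub ((hasDerivAt_pow 6 y).div_const 720)).congr_deriv
    (by norm_num; ring)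

theorem taylor_seven_le_sin {x : ℝ} (hx : 0 ≤ x) :
    x - x ^ 3 / 6 + x ^ 5 / 120 - x ^ 7 / 5040 ≤ sin x := by
  refine le_of_hasDerivAt_le (f := fun y => y - y ^ 3 / 6 + y ^ 5 / 120 - y ^ 7 / 5040)
    (fun y => ?_) hasDerivAt_sin (by norm_num) (fun y hy => taylor_six_le_cos hy) hx
  exact ((((hasDerivAt_id y).sub ((hasDerivAt_pow 3 y).div_const 6)).add
    ((hasDerivAt_pow 5 y).div_const 120)).sub ((hasDerivAt_pow 7 y).div_const 5040)).congr_deriv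
    (by norm_num; ring)

end Real

theorem taylor_lower_bound_nonneg {x : ℝ} (hx0 : 0 ≤ x) (hxπ : x ≤ π) :
    0 ≤ x ^ 3 / 12 - 17 * x ^ 5 / 1440 + 31 * x ^ 7 / 46080 - x ^ 9 / 60480 := by
  have hsq : x ^ 2 ≤ 9.9225 := by nlinarith [pi_lt_d2]
  have hcubic : 0 ≤ 80640 - 11424 * x ^ 2 + 651 * x ^ 4 - 16 * x ^ 6 := by
    nlinarith [sq_nonneg x, mul_nonneg (sub_nonneg.2 hsq) (sq_nonneg x),
      sq_nonneg (x ^ 2 - 9.9225)]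
  linarith [mul_nonneg (pow_nonneg hx0 3) hcubic]

theorem stmt_7 (x : ℝ) (hx : x ∈ Set.Icc (0 : ℝ) π) :
    0 ≤ (x ^ 2 / 12) * (x + Real.sin x) - 2 * Real.sin (x / 2) + x * Real.cos (x / 2) := by
  obtain ⟨hx0, hxπ⟩ := hx
  have hhalf : 0 ≤ x / 2 := by linarith
  have hsin := taylor_seven_le_sin hx0
  have hsin_half := sin_le_taylor_five hhalf
  have hcos_half := taylor_six_le_cos hhalf
  linarith [mul_nonneg (sq_nonneg x) (sub_nonneg.2 hsin), mul_nonneg hx0 (sub_nonneg.2 hcos_half),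
    taylor_lower_bound_nonneg hx0 hxπ]
end

section
/- For all ℓ₁, ℓ₂ ∈ (0, π) with ℓ₁ + ℓ₂ < π and ℓ₂ > 0, (ℓ₁/sin ℓ₁) cos(ℓ₁ + ℓ₂/2) ≠ ℓ₂/(2 sin(ℓ₂/2)). -/
open Real

private lemma mul_cos_lt_sin {t : ℝ} (ht : 0 < t) (ht' : t < π) : t * Real.cos t < Real.sin t := by
  have hmono : StrictMonoOn (fun t => Real.sin t - t * Real.cos t) (Set.Icc 0 π) := by
    apply strictMonoOn_of_deriv_pos (convex_Icc 0 π)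
    · fun_prop
    · intro x hx
      rw [interior_Icc] at hx
      have hd : HasDerivAt (fun t => Real.sin t - t * Real.cos t) (x * Real.sin x) x := by
        have h1 := (Real.hasDerivAt_sin x)
        have h2 := (hasDerivAt_id x).mul (Real.hasDerivAt_cos x)
        have := h1.sub h2
        refine this.congr_deriv ?_
        simp only [id_eq]; ring
      rw [hd.deriv]
      exact mul_pos hx.1 (Real.sin_pos_of_pos_of_lt_pi hx.1 hx.2)
  have h0 : (fun t => Real.sin t - t * Real.cos t) 0 < (fun t => Real.sin t - t * Real.cos t) t :=
    hmono (by simp [Real.pi_pos.le]) (by constructor <;> [linarith; linarith]) ht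
  simp at h0
  linarith

private lemma key_ineq {a b : ℝ} (ha : 0 < a) (hab : a < b) (hb : b < π) :
    a * Real.sin b < b * Real.sin a := by
  have hanti : StrictAntiOn (fun t => Real.sin t / t) (Set.Icc a b) := by
    apply strictAntiOn_of_deriv_neg (convex_Icc a b)
    · apply ContinuousOn.div Real.continuous_sin.continuousOn continuousOn_id
      intro x hx; exact ne_of_gt (lt_of_lt_of_le ha hx.1)
    · intro x hx
      rw [interior_Icc] at hx
      have hx0 : 0 < x := lt_trans ha hx.1
      have hd : HasDerivAt (fun t => Real.sin t / t) ((Real.cos x * x - Real.sin x * 1) / x ^ 2) x :=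
        (Real.hasDerivAt_sin x).div (hasDerivAt_id x) (ne_of_gt hx0)
      rw [hd.deriv]
      apply div_neg_of_neg_of_pos
      · have := mul_cos_lt_sin hx0 (lt_trans hx.2 hb)
        nlinarith
      · positivity
  have h := hanti (Set.left_mem_Icc.mpr hab.le) (Set.right_mem_Icc.mpr hab.le) hab
  simp only at h
  rw [div_lt_div_iff₀ (by linarith) ha] at h
  linarith [h]

theorem stmt_9 (ℓ₁ ℓ₂ : ℝ) (h₁ : ℓ₁ ∈ Set.Ioo (0 : ℝ) π) (h₂ : ℓ₂ ∈ Set.Ioo (0 : ℝ) π)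
    (hsum : ℓ₁ + ℓ₂ < π) :
    (ℓ₁ / Real.sin ℓ₁) * Real.cos (ℓ₁ + ℓ₂ / 2) ≠ ℓ₂ / (2 * Real.sin (ℓ₂ / 2)) := by
  obtain ⟨hl1, hl1'⟩ := h₁
  obtain ⟨hl2, hl2'⟩ := h₂
  have hs1 : 0 < Real.sin ℓ₁ := Real.sin_pos_of_pos_of_lt_pi hl1 hl1'
  have hs2 : 0 < Real.sin (ℓ₂ / 2) :=
    Real.sin_pos_of_pos_of_lt_pi (by linarith) (by linarith)
  have e1 : Real.sin (ℓ₁ + ℓ₂) =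
      Real.sin (ℓ₁ + ℓ₂/2) * Real.cos (ℓ₂/2) + Real.cos (ℓ₁ + ℓ₂/2) * Real.sin (ℓ₂/2) := by
    rw [show ℓ₁ + ℓ₂ = (ℓ₁ + ℓ₂/2) + ℓ₂/2 from by ring, Real.sin_add]
  have e2 := Real.sin_sub (ℓ₁ + ℓ₂/2) (ℓ₂/2)
  rw [show ℓ₁ + ℓ₂/2 - ℓ₂/2 = ℓ₁ from by ring] at e2
  have hkey := key_ineq hl1 (by linarith : ℓ₁ < ℓ₁ + ℓ₂) hsum
  intro heq
  rw [div_mul_eq_mul_div, div_eq_div_iff hs1.ne' (by positivity)] at heq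
  nlinarith [heq, e1, e2]
end

section
/- Let m > 0 and n ≥ 2 be an integer. The function f(x) = m sin(πx/(mn)) − x sin(π/n) on [0, m) vanishes only at x = 0; in particular if λ₀ ∈ [0, m) satisfies λ₀ sin(π/n) = m sin(πλ₀/(mn)), then λ₀ = 0. -/
open Real

/-! Strict concavity of `sin` on `[0, π]` together with `sin 0 = 0` gives `t sin x < sin (t x)` for
`0 < t < 1` and `0 < x ≤ π`. Writing `t = λ₀ / m` and `x = π / n`, a root `λ₀ ∈ (0, m)` would turn
this strict inequality into an equality. -/

theorem StrictConcaveOn.smul_lt_apply_smul_of_apply_zero {E : Type*} [AddCommGroup E]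
    [Module ℝ E] {s : Set E} {f : E → ℝ} (hf : StrictConcaveOn ℝ s f) (h0 : (0 : E) ∈ s)
    (hf0 : f 0 = 0) {x : E} (hx : x ∈ s) (hx0 : x ≠ 0) {t : ℝ} (ht0 : 0 < t) (ht1 : t < 1) :
    t * f x < f (t • x) := by
  simpa [hf0] using hf.2 h0 hx hx0.symm (sub_pos.2 ht1) ht0 (sub_add_cancel 1 t)

theorem Real.mul_sin_lt_sin_mul {x t : ℝ} (hx0 : 0 < x) (hxπ : x ≤ π) (ht0 : 0 < t)
    (ht1 : t < 1) : t * sin x < sin (t * x) :=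
  strictConcaveOn_sin_Icc.smul_lt_apply_smul_of_apply_zero ⟨le_rfl, pi_pos.le⟩ sin_zero
    ⟨hx0.le, hxπ⟩ hx0.ne' ht0 ht1

theorem stmt_10 (m : ℝ) (hm : 0 < m) (n : ℕ) (hn : 2 ≤ n)
    (lam0 : ℝ) (hlam : lam0 ∈ Set.Ico (0 : ℝ) m)
    (heq : lam0 * Real.sin (π / n) = m * Real.sin (π * lam0 / (m * n))) :
    lam0 = 0 := by
  by_contra hne
  have hl0 : 0 < lam0 := lt_of_le_of_ne hlam.1 (Ne.symm hne)
  have hn1 : (1 : ℝ) ≤ n := by exact_mod_cast one_le_two.trans hn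
  have hx0 : 0 < π / n := div_pos pi_pos (by linarith)
  have hxπ : π / n ≤ π := div_le_self pi_pos.le hn1
  have key := mul_sin_lt_sin_mul hx0 hxπ (div_pos hl0 hm) ((div_lt_one hm).2 hlam.2)
  have hlt : lam0 * sin (π / n) < m * sin (π * lam0 / (m * n)) :=
    calc lam0 * sin (π / n) = m * (lam0 / m * sin (π / n)) := by field_simp
      _ < m * sin (lam0 / m * (π / n)) := mul_lt_mul_of_pos_left key hm
      _ = m * sin (π * lam0 / (m * n)) := by ring_nf
  exact hlt.ne heq
end

section
/- Suppose λ₀, m, ℓ_k, ℓ_{k+1}, ℓ_{k+2}, ℓ_{k+3} are real numbers with m ≠ 0 satisfying λ₀ sin((ℓ_k+ℓ_{k+1})/2) = m sin((ℓ_{k+1}−ℓ_k)/2) and λ₀ sin((ℓ_{k+1}+ℓ_{k+2})/2) = −m sin((ℓ_{k+2}−ℓ_{k+1})/2), with all ℓ's in (0, π). Then ℓ_k = ℓ_{k+2}. -/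
/-!
Eliminating `lam0` from the two equations leaves `m * (sin ℓk1 * sin ((ℓk2 - ℓk) / 2)) = 0`, by a
product-to-sum identity. Since `m ≠ 0` and `sin ℓk1 > 0`, the sine of the half-difference vanishes,
and that half-difference lies in `(-π/2, π/2)`.
-/

open Real

theorem Real.sin_half_sub_mul_sin_half_add_add_sin_half_sub_mul_sin_half_add (a b c : ℝ) :
    sin ((b - a) / 2) * sin ((b + c) / 2) + sin ((c - b) / 2) * sin ((a + b) / 2) =
      sin b * sin ((c - a) / 2) := by
  conv_rhs => rw [← add_halves b]
  simp only [sub_div, add_div, sin_sub, sin_add]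
  ring

theorem Real.sin_mul_sin_half_sub_eq_zero_of_linear_system {lam m a b c : ℝ} (hm : m ≠ 0)
    (h1 : lam * sin ((a + b) / 2) = m * sin ((b - a) / 2))
    (h2 : lam * sin ((b + c) / 2) = -m * sin ((c - b) / 2)) :
    sin b * sin ((c - a) / 2) = 0 := by
  have hdet : m * (sin b * sin ((c - a) / 2)) = 0 := by
    linear_combination -sin ((b + c) / 2) * h1 + sin ((a + b) / 2) * h2 -
      m * sin_half_sub_mul_sin_half_add_add_sin_half_sub_mul_sin_half_add a b c
  exact (mul_eq_zero.mp hdet).resolve_left hm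

theorem Real.eq_of_sin_half_sub_eq_zero {a c : ℝ} (hac : |c - a| < 2 * π)
    (h : sin ((c - a) / 2) = 0) : a = c := by
  obtain ⟨hlt, hgt⟩ := abs_lt.mp hac
  have := (sin_eq_zero_iff_of_lt_of_lt (by linarith) (by linarith)).mp h
  linarith

theorem stmt_11_general (lam0 m ℓk ℓk1 ℓk2 : ℝ) (hm : m ≠ 0)
    (hℓk : ℓk ∈ Set.Ioo (0 : ℝ) π) (hℓk1 : ℓk1 ∈ Set.Ioo (0 : ℝ) π)
    (hℓk2 : ℓk2 ∈ Set.Ioo (0 : ℝ) π)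
    (h1 : lam0 * Real.sin ((ℓk + ℓk1) / 2) = m * Real.sin ((ℓk1 - ℓk) / 2))
    (h2 : lam0 * Real.sin ((ℓk1 + ℓk2) / 2) = -m * Real.sin ((ℓk2 - ℓk1) / 2)) :
    ℓk = ℓk2 := by
  have hsin : sin ℓk1 ≠ 0 := (sin_pos_of_pos_of_lt_pi hℓk1.1 hℓk1.2).ne'
  have hdet := sin_mul_sin_half_sub_eq_zero_of_linear_system hm h1 h2
  refine eq_of_sin_half_sub_eq_zero ?_ ((mul_eq_zero.mp hdet).resolve_left hsin)
  obtain ⟨hk0, hkπ⟩ := hℓk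
  obtain ⟨hk20, hk2π⟩ := hℓk2
  exact abs_sub_lt_iff.mpr ⟨by linarith, by linarith⟩

theorem stmt_11 (lam0 m ℓk ℓk1 ℓk2 ℓk3 : ℝ) (hm : m ≠ 0)
    (hℓk : ℓk ∈ Set.Ioo (0 : ℝ) π) (hℓk1 : ℓk1 ∈ Set.Ioo (0 : ℝ) π)
    (hℓk2 : ℓk2 ∈ Set.Ioo (0 : ℝ) π) (hℓk3 : ℓk3 ∈ Set.Ioo (0 : ℝ) π)
    (h1 : lam0 * Real.sin ((ℓk + ℓk1) / 2) = m * Real.sin ((ℓk1 - ℓk) / 2))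
    (h2 : lam0 * Real.sin ((ℓk1 + ℓk2) / 2) = -m * Real.sin ((ℓk2 - ℓk1) / 2)) :
    ℓk = ℓk2 :=
  stmt_11_general lam0 m ℓk ℓk1 ℓk2 hm hℓk hℓk1 hℓk2 h1 h2
end

section
/- For a, b real with a < b and sin(b−a) ≠ 0, the function u(x) = A₀ cos x + B₀ sin x − c − (d/2) x sin x with A₀ = c cos((a+b)/2)/cos((b−a)/2) − (d/2)(b−a) sin a sin b / sin(b−a) and B₀ = c sin((a+b)/2)/cos((b−a)/2) + (d/2)(b sin b cos a − a sin a cos b)/sin(b−a) satisfies u(a) = 0 and u(b) = 0. -/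
/-! With `m = (a + b) / 2` and `h = (b - a) / 2`, the coefficients are chosen so that
`A₀ cos x + B₀ sin x = c cos (m - x) / cos h + (d / 2) P(x) / sin (b - a)`, where
`P(x) = (b sin b cos a - a sin a cos b) sin x - (b - a) sin a sin b cos x`.
Since `cos (m - a) = cos (m - b) = cos h` and, by the subtraction formula for `sin (b - a)`,
`P(x) = x sin x sin (b - a)` at `x = a` and `x = b`, both endpoint values of `u` reduce to
`c + (d / 2) x sin x - c - (d / 2) x sin x = 0`. -/

open Real

namespace EndpointSolution

variable (a b : ℝ)

theorem cos_midpoint_sub_left : cos ((a + b) / 2 - a) = cos ((b - a) / 2) := by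
  ring_nf

theorem cos_midpoint_sub_right : cos ((a + b) / 2 - b) = cos ((b - a) / 2) := by
  rw [← cos_neg]
  ring_nf

theorem particular_numerator_left :
    (b * sin b * cos a - a * sin a * cos b) * sin a - (b - a) * sin a * sin b * cos a =
      a * sin a * sin (b - a) := by
  rw [sin_sub]
  ring

theorem particular_numerator_right :
    (b * sin b * cos a - a * sin a * cos b) * sin b - (b - a) * sin a * sin b * cos b =
      b * sin b * sin (b - a) := by
  rw [sin_sub]
  ring

theorem coeff_combination (c d x : ℝ) :
    (c * cos ((a + b) / 2) / cos ((b - a) / 2) -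
        (d / 2) * (b - a) * sin a * sin b / sin (b - a)) * cos x +
      (c * sin ((a + b) / 2) / cos ((b - a) / 2) +
        (d / 2) * (b * sin b * cos a - a * sin a * cos b) / sin (b - a)) * sin x =
      c * cos ((a + b) / 2 - x) / cos ((b - a) / 2) +
        (d / 2) * ((b * sin b * cos a - a * sin a * cos b) * sin x -
          (b - a) * sin a * sin b * cos x) / sin (b - a) := by
  rw [cos_sub]
  ring

end EndpointSolution

open EndpointSolution in
theorem stmt_12_general (a b c d : ℝ)
    (hsin : Real.sin (b - a) ≠ 0) (hcos : Real.cos ((b - a) / 2) ≠ 0)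
    (A₀ B₀ : ℝ)
    (hA₀ : A₀ = c * Real.cos ((a + b) / 2) / Real.cos ((b - a) / 2) -
      (d / 2) * (b - a) * Real.sin a * Real.sin b / Real.sin (b - a))
    (hB₀ : B₀ = c * Real.sin ((a + b) / 2) / Real.cos ((b - a) / 2) +
      (d / 2) * (b * Real.sin b * Real.cos a - a * Real.sin a * Real.cos b) / Real.sin (b - a))
    (u : ℝ → ℝ)
    (hu : ∀ x, u x = A₀ * Real.cos x + B₀ * Real.sin x - c - (d / 2) * x * Real.sin x) :
    u a = 0 ∧ u b = 0 := by
  subst hA₀ hB₀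
  rw [hu, hu, coeff_combination, coeff_combination, cos_midpoint_sub_left,
    cos_midpoint_sub_right, particular_numerator_left, particular_numerator_right]
  constructor <;> field_simp <;> ring

theorem stmt_12 (a b c d : ℝ) (hab : a < b)
    (hsin : Real.sin (b - a) ≠ 0) (hcos : Real.cos ((b - a) / 2) ≠ 0)
    (A₀ B₀ : ℝ)
    (hA₀ : A₀ = c * Real.cos ((a + b) / 2) / Real.cos ((b - a) / 2) -
      (d / 2) * (b - a) * Real.sin a * Real.sin b / Real.sin (b - a))
    (hB₀ : B₀ = c * Real.sin ((a + b) / 2) / Real.cos ((b - a) / 2) +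
      (d / 2) * (b * Real.sin b * Real.cos a - a * Real.sin a * Real.cos b) / Real.sin (b - a))
    (u : ℝ → ℝ)
    (hu : ∀ x, u x = A₀ * Real.cos x + B₀ * Real.sin x - c - (d / 2) * x * Real.sin x) :
    u a = 0 ∧ u b = 0 :=
  stmt_12_general a b c d hsin hcos A₀ B₀ hA₀ hB₀ u hu
end

section
/- Let a ∈ ℝ, m + λ₀ > 0 and λ₁ ∈ ℝ. If the boundary value problem −u'' − u = (m + λ₀) + λ₁ cos x on (a, a+π), u(a) = u(a+π) = 0, has a solution, then m + λ₀ = (λ₁ π /4) sin a. -/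
/-!
Fredholm alternative: `sin (x - a)` solves the homogeneous problem `-v'' - v = 0`,
`v a = v (a + π) = 0`, so by Green's identity any right-hand side `f` for which the
boundary value problem is solvable satisfies `∫ f (x) sin (x - a) = 0` over `[a, a + π]`.
For `f = c + d cos x` this integral is `2 c - d π sin a / 2`.
-/

open Real

theorem integral_mul_sub_mul_eq_wronskian_sub {u u' u'' v v' v'' : ℝ → ℝ} {a b : ℝ}
    (hu : ∀ x, HasDerivAt u (u' x) x) (hu' : ∀ x, HasDerivAt u' (u'' x) x)
    (hv : ∀ x, HasDerivAt v (v' x) x) (hv' : ∀ x, HasDerivAt v' (v'' x) x)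
    (hu'' : Continuous u'') (hv'' : Continuous v'') :
    ∫ x in a..b, (u'' x * v x - u x * v'' x) =
      (u' b * v b - u b * v' b) - (u' a * v a - u a * v' a) := by
  have hcu : Continuous u := continuous_iff_continuousAt.2 fun x => (hu x).continuousAt
  have hcv : Continuous v := continuous_iff_continuousAt.2 fun x => (hv x).continuousAt
  refine intervalIntegral.integral_eq_sub_of_hasDerivAt (f := u' * v - u * v') (fun x _ => ?_)
    ((show Continuous fun x => u'' x * v x - u x * v'' x by fun_prop).intervalIntegrable a b)
  convert ((hu' x).mul (hv x)).sub ((hu x).mul (hv' x)) using 1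
  ring

theorem integral_sin_sub_self_add_pi (a : ℝ) : ∫ x in a..a + π, sin (x - a) = 2 := by
  rw [intervalIntegral.integral_comp_sub_right, integral_sin]
  norm_num

theorem integral_cos_mul_sin_sub_self_add_pi (a : ℝ) :
    ∫ x in a..a + π, cos x * sin (x - a) = -(π * sin a / 2) := by
  have hprod : ∀ x, cos x * sin (x - a) = sin (2 * x - a) / 2 - sin a / 2 := by
    intro x
    have e1 : sin (2 * x - a) = sin x * cos (x - a) + cos x * sin (x - a) := by
      rw [show 2 * x - a = x + (x - a) by ring, sin_add]
    have e2 : sin a = sin x * cos (x - a) - cos x * sin (x - a) := by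
      rw [← sin_sub, sub_sub_cancel]
    linear_combination e2 / 2 - e1 / 2
  have hsin : ∫ x in a..a + π, sin (2 * x - a) = 0 := by
    rw [intervalIntegral.integral_comp_mul_left (fun x => sin (x - a)) two_ne_zero,
      intervalIntegral.integral_comp_sub_right, integral_sin,
      show 2 * (a + π) - a = 2 * a - a + 2 * π by ring, cos_add_two_pi, sub_self, smul_zero]
  simp_rw [hprod]
  rw [intervalIntegral.integral_sub (Continuous.intervalIntegrable (by fun_prop) _ _)
      intervalIntegrable_const, intervalIntegral.integral_div, hsin]
  simp

theorem integral_add_mul_cos_mul_sin_sub_self_add_pi (c d a : ℝ) :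
    ∫ x in a..a + π, (c + d * cos x) * sin (x - a) = 2 * c - d * (π * sin a / 2) := by
  simp_rw [add_mul, mul_assoc]
  rw [intervalIntegral.integral_add (Continuous.intervalIntegrable (by fun_prop) _ _)
      (Continuous.intervalIntegrable (by fun_prop) _ _),
    intervalIntegral.integral_const_mul, intervalIntegral.integral_const_mul,
    integral_sin_sub_self_add_pi, integral_cos_mul_sin_sub_self_add_pi]
  ring

theorem integral_neg_deriv_deriv_sub_mul_sin_sub_eq_zero {u : ℝ → ℝ} {a : ℝ}
    (hu : ContDiff ℝ 2 u) (ha : u a = 0) (hb : u (a + π) = 0) :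
    ∫ x in a..a + π, (-deriv (deriv u) x - u x) * sin (x - a) = 0 := by
  have hu' : ContDiff ℝ 1 (deriv u) := hu.deriv'
  have hsin x : HasDerivAt (fun y => sin (y - a)) (cos (x - a)) x :=
    (hasDerivAt_sin (x - a)).comp_sub_const x a
  have hcos x : HasDerivAt (fun y => cos (y - a)) (-sin (x - a)) x :=
    (hasDerivAt_cos (x - a)).comp_sub_const x a
  have green := integral_mul_sub_mul_eq_wronskian_sub (a := a) (b := a + π)
    (fun x => (hu.differentiable two_ne_zero x).hasDerivAt)
    (fun x => (hu'.differentiable one_ne_zero x).hasDerivAt) hsin hcos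
    (hu'.continuous_deriv le_rfl) (by fun_prop)
  simp only [ha, hb, add_sub_cancel_left, sub_self, sin_pi, sin_zero, mul_zero,
    zero_mul] at green
  rw [← neg_eq_zero, ← intervalIntegral.integral_neg, ← green]
  congr 1 with x
  ring

theorem stmt_14_general (a m lam0 lam1 : ℝ)
    (hex : ∃ u : ℝ → ℝ, ContDiff ℝ 2 u ∧
      (∀ x ∈ Set.Icc a (a + π),
        -(deriv (deriv u) x) - u x = (m + lam0) + lam1 * Real.cos x) ∧
      u a = 0 ∧ u (a + π) = 0) :
    m + lam0 = lam1 * π / 4 * Real.sin a := by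
  obtain ⟨u, hu, hode, ha, hb⟩ := hex
  have hle : a ≤ a + π := by linarith [pi_pos]
  have horth := integral_neg_deriv_deriv_sub_mul_sin_sub_eq_zero hu ha hb
  rw [intervalIntegral.integral_congr (g := fun x => (m + lam0 + lam1 * cos x) * sin (x - a))
      fun x hx => by rw [Set.uIcc_of_le hle] at hx; simp only [hode x hx],
    integral_add_mul_cos_mul_sin_sub_self_add_pi] at horth
  linarith

theorem stmt_14 (a m lam0 lam1 : ℝ) (hpos : 0 < m + lam0)
    (hex : ∃ u : ℝ → ℝ, ContDiff ℝ 2 u ∧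
      (∀ x ∈ Set.Icc a (a + π),
        -(deriv (deriv u) x) - u x = (m + lam0) + lam1 * Real.cos x) ∧
      u a = 0 ∧ u (a + π) = 0) :
    m + lam0 = lam1 * π / 4 * Real.sin a :=
  stmt_14_general a m lam0 lam1 hex
end

section
/- Let G(x,y) = sqrt(sin x sin y)/y on [0, π/2] × [1.17/2, π/2]. Then for all t ∈ [0, π/3], G(t, t + π/6) ≤ 2/π; moreover, since G is increasing in x and decreasing in y on this domain, G(x,y) < 2/π whenever y > x + π/6 with x ∈ [0, π/3], y ∈ [1.17/2, π/2]. -/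
/-!
Writing `b = t + π/6`, the product formula gives `sin t * sin b = (√3/2 - sin v) / 2` with
`v = π/3 - 2t ∈ [-π/3, π/3]`, and `(2b/π)² = 2 (2/3 - v/π)² / 2`. So the bound on the diagonal
`y = x + π/6` is the one-variable inequality `√3/2 - sin v ≤ 2 (2/3 - v/π)²`, which is tight
(slack about `6·10⁻⁵` near `v ≈ -0.278`): for `v ≥ 0` the cubic Taylor lower bound of `sin`
suffices, for `v ≤ 0` one needs the quintic upper bound, and then both sides are polynomials.
Off the diagonal, `G(x, y)² = sin x · (sin y / y²)` and `sin y / y²` is strictly decreasing.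
-/

open Real

theorem cos_le_one_sub_sq_div_two_add_pow_four (x : ℝ) :
    cos x ≤ 1 - x ^ 2 / 2 + x ^ 4 / 24 := by
  wlog hx : 0 ≤ x generalizing x
  · simpa [Even.neg_pow, even_two, (by decide : Even 4)] using this (-x) (by linarith)
  let f (t : ℝ) : ℝ := 1 - t ^ 2 / 2 + t ^ 4 / 24 - cos t
  have hderiv (t : ℝ) : deriv f t = sin t - (t - t ^ 3 / 6) := by
    simp (disch := fun_prop) only [f, deriv_fun_sub, deriv_fun_add, deriv_const', deriv_div_const,
      deriv_fun_pow, Nat.cast_ofNat, Nat.add_one_sub_one, pow_one, deriv_id'', mul_one, zero_sub,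
      deriv_cos', sub_neg_eq_add]
    ring
  have hmono : MonotoneOn f (Set.Ici 0) := by
    apply monotoneOn_of_deriv_nonneg (convex_Ici 0) (by fun_prop) (by fun_prop)
    intro t ht
    rw [interior_Ici] at ht
    simpa [hderiv] using sin_ge_sub_cube ht.le
  have := hmono Set.self_mem_Ici hx hx
  simp only [f, cos_zero] at this
  linarith

theorem sin_le_sub_cube_add_pow_five {x : ℝ} (hx : 0 ≤ x) :
    sin x ≤ x - x ^ 3 / 6 + x ^ 5 / 120 := by
  let f (t : ℝ) : ℝ := t - t ^ 3 / 6 + t ^ 5 / 120 - sin t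
  have hderiv (t : ℝ) : deriv f t = 1 - t ^ 2 / 2 + t ^ 4 / 24 - cos t := by
    simp (disch := fun_prop) only [f, deriv_fun_sub, deriv_fun_add, deriv_id'', deriv_div_const,
      deriv_fun_pow, Nat.cast_ofNat, Nat.add_one_sub_one, mul_one, Real.deriv_sin, sub_left_inj]
    ring
  have hmono : MonotoneOn f (Set.Ici 0) := by
    apply monotoneOn_of_deriv_nonneg (convex_Ici 0) (by fun_prop) (by fun_prop)
    intro t ht
    rw [interior_Ici] at ht
    simpa [hderiv] using cos_le_one_sub_sq_div_two_add_pow_four t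
  have := hmono Set.self_mem_Ici hx hx
  simp only [f, sin_zero] at this
  linarith

theorem sqrt_three_div_two_sub_sin_le {v : ℝ} (hv₁ : -(π / 3) ≤ v) (hv₂ : v ≤ π / 3) :
    √3 / 2 - sin v ≤ 2 * (2 / 3 - v / π) ^ 2 := by
  have hπ₁ := pi_gt_d4
  have hπ₂ := pi_lt_d4
  have hsqrt : √3 / 2 ≤ 0.8660255 := by
    rw [div_le_iff₀ two_pos, sqrt_le_left (by norm_num)]
    norm_num
  rcases le_total 0 v with hv | hv
  · have hinv : v / π ≤ 0.31832 * v := by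
      rw [div_le_iff₀ pi_pos]
      nlinarith
    have hB : 0 ≤ 2 / 3 - 0.31832 * v := by nlinarith
    calc √3 / 2 - sin v ≤ 0.8660255 - (v - v ^ 3 / 6) := by linarith [sin_ge_sub_cube hv]
      _ ≤ 2 * (2 / 3 - 0.31832 * v) ^ 2 := by
        nlinarith [mul_nonneg hv (sq_nonneg v), sq_nonneg v]
      _ ≤ 2 * (2 / 3 - v / π) ^ 2 := by gcongr
  · set w := -v with hw
    have hw₀ : 0 ≤ w := by linarith
    have hw₁ : 0 ≤ 1.0472 - w := by nlinarith
    have hinv : 0.3183 * w ≤ w / π := by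
      rw [le_div_iff₀ pi_pos]
      nlinarith
    calc √3 / 2 - sin v ≤ 0.8660255 + (w - w ^ 3 / 6 + w ^ 5 / 120) := by
          rw [show v = -w by ring, sin_neg]
          linarith [sin_le_sub_cube_add_pow_five hw₀]
      _ ≤ 2 * (2 / 3 + 0.3183 * w) ^ 2 := by
        -- the minimum of the difference is attained near `w = 0.2782`
        nlinarith [sq_nonneg (w - 0.2782), mul_nonneg hw₀ (sq_nonneg (w - 0.2782)),
          mul_nonneg (mul_nonneg hw₁ hw₀) (sq_nonneg (w - 0.2782)),
          mul_nonneg (mul_nonneg hw₁ (mul_nonneg hw₀ hw₀)) (sq_nonneg (w - 0.2782))]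
      _ ≤ 2 * (2 / 3 - v / π) ^ 2 := by
        rw [show 2 / 3 - v / π = 2 / 3 + w / π by rw [hw]; ring]
        gcongr

theorem sin_mul_sin_add_pi_div_six_le {t : ℝ} (ht₀ : 0 ≤ t) (ht : t ≤ π / 3) :
    sin t * sin (t + π / 6) ≤ (2 / π * (t + π / 6)) ^ 2 := by
  have hprod : sin t * sin (t + π / 6) = (√3 / 2 - sin (π / 3 - 2 * t)) / 2 := by
    rw [← cos_pi_div_six, ← cos_pi_div_two_sub (π / 3 - 2 * t), cos_sub_cos,
      show (π / 6 + (π / 2 - (π / 3 - 2 * t))) / 2 = t + π / 6 by ring,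
      show (π / 6 - (π / 2 - (π / 3 - 2 * t))) / 2 = -t by ring, sin_neg]
    ring
  have hsq : (2 / π * (t + π / 6)) ^ 2 = 2 * (2 / 3 - (π / 3 - 2 * t) / π) ^ 2 / 2 := by
    field_simp
    ring
  rw [hprod, hsq]
  gcongr
  exact sqrt_three_div_two_sub_sin_le (by linarith) (by linarith)

theorem sqrt_sin_mul_sin_add_pi_div_six_div_le {t : ℝ} (ht : t ∈ Set.Icc 0 (π / 3)) :
    √(sin t * sin (t + π / 6)) / (t + π / 6) ≤ 2 / π := by
  have hb : 0 < t + π / 6 := by linarith [ht.1, pi_pos]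
  rw [div_le_iff₀ hb, sqrt_le_left (by positivity)]
  exact sin_mul_sin_add_pi_div_six_le ht.1 ht.2

theorem strictAntiOn_sin_div_sq : StrictAntiOn (fun z ↦ sin z / z ^ 2) (Set.Ioc 0 π) := by
  apply strictAntiOn_of_deriv_neg (convex_Ioc 0 π)
  · exact continuousOn_sin.div (by fun_prop) fun z hz ↦ by positivity [hz.1]
  intro z hz
  rw [interior_Ioc] at hz
  obtain ⟨hz₀, hzπ⟩ := hz
  have hsin : 0 < sin z := sin_pos_of_pos_of_lt_pi hz₀ hzπ
  have hcos : z * cos z < 2 * sin z := by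
    rcases lt_or_ge z (π / 2) with hz | hz
    · have := lt_tan hz₀ hz
      rw [tan_eq_sin_div_cos, lt_div_iff₀ (cos_pos_of_mem_Ioo ⟨by linarith, hz⟩)] at this
      linarith
    · nlinarith [cos_nonpos_of_pi_div_two_le_of_le hz (by linarith)]
  have hderiv : deriv (fun z ↦ sin z / z ^ 2) z = (z * cos z - 2 * sin z) / z ^ 3 := by
    refine (((hasDerivAt_sin z).fun_div (hasDerivAt_pow 2 z) (by positivity)).deriv).trans ?_
    field_simp
    ring
  rw [hderiv]
  exact div_neg_of_neg_of_pos (by linarith) (by positivity)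

theorem sqrt_mul_div_eq_sqrt_mul_div_sq (a b : ℝ) {y : ℝ} (hy : 0 < y) :
    √(a * b) / y = √(a * (b / y ^ 2)) := by
  rw [← mul_div_assoc, sqrt_div' _ (by positivity), sqrt_sq hy.le]

theorem stmt_17 :
    (∀ t ∈ Set.Icc (0 : ℝ) (π / 3),
      Real.sqrt (Real.sin t * Real.sin (t + π / 6)) / (t + π / 6) ≤ 2 / π) ∧
    (∀ x y : ℝ, x ∈ Set.Icc (0 : ℝ) (π / 3) → y ∈ Set.Icc (1.17 / 2) (π / 2) →
      y > x + π / 6 → Real.sqrt (Real.sin x * Real.sin y) / y < 2 / π) := by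
  refine ⟨fun t ht ↦ sqrt_sin_mul_sin_add_pi_div_six_div_le ht, fun x y hx hy hxy ↦ ?_⟩
  have hb : 0 < x + π / 6 := by linarith [hx.1, pi_pos]
  have hsiny : 0 ≤ sin y := sin_nonneg_of_nonneg_of_le_pi (by linarith) (by linarith [hy.2, pi_pos])
  have hsinx : 0 ≤ sin x := sin_nonneg_of_nonneg_of_le_pi hx.1 (by linarith [hx.2, pi_pos])
  rcases hsinx.eq_or_lt with hzero | hpos
  · rw [← hzero, zero_mul, sqrt_zero, zero_div]
    positivity
  have hdecr : sin y / y ^ 2 < sin (x + π / 6) / (x + π / 6) ^ 2 :=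
    strictAntiOn_sin_div_sq ⟨hb, by linarith [hx.2]⟩ ⟨by linarith, by linarith [hy.2, pi_pos]⟩ hxy
  calc √(sin x * sin y) / y = √(sin x * (sin y / y ^ 2)) :=
        sqrt_mul_div_eq_sqrt_mul_div_sq _ _ (by linarith)
    _ < √(sin x * (sin (x + π / 6) / (x + π / 6) ^ 2)) :=
        sqrt_lt_sqrt (by positivity) (by gcongr)
    _ = √(sin x * sin (x + π / 6)) / (x + π / 6) := (sqrt_mul_div_eq_sqrt_mul_div_sq _ _ hb).symm
    _ ≤ 2 / π := sqrt_sin_mul_sin_add_pi_div_six_div_le hx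
end
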